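/- The assignment μ(s) = q^{−K(s)} is invariant under the BDM transition matrix: for every state s' ∈ S, ∑_{s ∈ S} 𝒯(s,s')·q^{−K(s)} = q^{−K(s')}; that is, (q^{−K(s)})_{s∈S} is a left eigenvector of the infinite stochastic matrix 𝒯 with eigenvalue 1. -/

import Mathlib

open scoped Classical ENNReal
open Filter

namespace BDM

/-- Augmented BDM state set `S̄`: batteries `b 1, …, b M` (entries outside `{1,…,M}`
are fixed to `0`), drain `d`, time residue `T`, ministep `t ∈ {1,…,M+1}`, and the
invariant `d + T + ∑ b_m = 0`. -/
structure St (M : ℕ) where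
  b : ℕ → ℤ
  d : ℤ
  T : ℤ
  t : ℕ
  ht1 : 1 ≤ t
  ht2 : t ≤ M + 1
  hb0 : ∀ m, m = 0 ∨ M < m → b m = 0
  inv : d + T + ∑ m ∈ Finset.range M, b (m + 1) = 0

/-- Membership in the (restricted) state set `S`: `0 ≤ T ≤ M`. -/
def inS {M : ℕ} (s : St M) : Prop := 0 ≤ s.T ∧ s.T ≤ (M : ℤ)

/-- The initial state `s₀ = (0,…,0,0;0,M+1)`. -/
def init (M : ℕ) : St M where
  b := fun _ => 0
  d := 0
  T := 0
  t := M + 1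
  ht1 := Nat.le_add_left 1 M
  ht2 := le_refl _
  hb0 := fun _ _ => rfl
  inv := by simp

/-- The six actions of the BDM. -/
inductive Act : Type
  | D | I | Ne | Nl | dm | bp
deriving DecidableEq

/-- Feasible transitions of the BDM. -/
def Step {M : ℕ} (s : St M) : Act → St M → Prop
  | .D, s' => s.t ≤ M ∧ s.d < s.b s.t ∧ s'.t = s.t + 1 ∧ s'.T = s.T ∧
      s'.d = s.b s.t ∧ s'.b = Function.update s.b s.t s.d
  | .I, s' => s.t ≤ M ∧ s.d < s.b s.t ∧ s'.t = s.t + 1 ∧ s'.T = s.T ∧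
      s'.d = s.d ∧ s'.b = s.b
  | .Ne, s' => s.t ≤ M ∧ s.b s.t = s.d ∧ s'.t = s.t + 1 ∧ s'.T = s.T ∧
      s'.d = s.d ∧ s'.b = s.b
  | .Nl, s' => s.t ≤ M ∧ s.b s.t < s.d ∧ s'.t = s.t + 1 ∧ s'.T = s.T ∧
      s'.d = s.d ∧ s'.b = s.b
  | .dm, s' => s.t = M + 1 ∧ s.T < M ∧ s'.t = 1 ∧ s'.T = s.T + 1 ∧
      s'.d = s.d - 1 ∧ s'.b = s.b
  | .bp, s' => s.t = M + 1 ∧ s.T = M ∧ s'.t = 1 ∧ s'.T = 0 ∧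
      s'.d = s.d ∧ s'.b = fun m => if 1 ≤ m ∧ m ≤ M then s.b m + 1 else 0

/-- The `(M+1)`-tuple `(b_1,…,b_{t−1},d,b_t,…,b_M)` as a list. -/
def tuple {M : ℕ} (s : St M) : List ℤ :=
  ((List.range M).map (fun m => s.b (m + 1))).insertIdx (s.t - 1) s.d

/-- One transposition of adjacent entries of a list. -/
def AdjSwap (l l' : List ℤ) : Prop :=
  ∃ l₁ x y l₂, l = l₁ ++ x :: y :: l₂ ∧ l' = l₁ ++ y :: x :: l₂

/-- The set of numbers `n` such that `l` can be sorted into nonincreasing order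
by `n` transpositions of adjacent entries. -/
def SortCost (l : List ℤ) : Set ℕ :=
  {n | ∃ f : ℕ → List ℤ, f 0 = l ∧ (∀ i < n, AdjSwap (f i) (f (i + 1))) ∧
        (f n).Pairwise (· ≥ ·)}

/-- `π_l`: the minimal number of adjacent transpositions needed to sort `l`
into nonincreasing order. -/
noncomputable def piMin (l : List ℤ) : ℕ := sInf (SortCost l)

/-- The nonincreasing rearrangement of a list. -/
def sortedTuple (l : List ℤ) : List ℤ := l.insertionSort (· ≥ ·)

/-- The class `K(s) = −π_s + M·T + 2·∑_{m=1}^{M+1} b̃_m·(M+1−m)`. -/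
noncomputable def Kc {M : ℕ} (s : St M) : ℤ :=
  -(piMin (tuple s) : ℤ) + (M : ℤ) * s.T +
    2 * ∑ i ∈ Finset.range (M + 1), (sortedTuple (tuple s)).getD i 0 * ((M : ℤ) - i)

/-- The transition matrix `𝒯(s,s')` of the BDM, with values in `ℝ≥0∞`. -/
noncomputable def Tmat (M q : ℕ) (s s' : St M) : ℝ≥0∞ :=
  if Step s .D s' then ((q : ℝ≥0∞) - 1) / q
  else if Step s .I s' then 1 / q
  else if (Step s .Ne s' ∨ Step s .Nl s' ∨ Step s .dm s' ∨ Step s .bp s') then 1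
  else 0

/-- The state set `S` as a subtype. -/
def SS (M : ℕ) : Type := {s : St M // inS s}

/-- The mass distributions `μ_τ` on `S`: `μ_0` is the point mass at `s₀` and
`μ_{τ+1}(s') = ∑_{s∈S} 𝒯(s,s')·μ_τ(s)`. -/
noncomputable def mu (M q : ℕ) : ℕ → SS M → ℝ≥0∞
  | 0, s => if s.1 = init M then 1 else 0
  | τ + 1, s' => ∑' s : SS M, Tmat M q s.1 s'.1 * mu M q τ s

/-- The asymptotic measure `μ_∞(s) = limsup_{τ→∞} μ_τ(s)`. -/
noncomputable def muInf (M q : ℕ) (s : SS M) : ℝ≥0∞ :=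
  Filter.atTop.limsup (fun τ => mu M q τ s)

end BDM


namespace BDM

/-! ### Inversion count and pairwise-minimum sum -/

def invL : List ℤ → ℕ
  | [] => 0
  | x :: l => l.countP (fun y => decide (x < y)) + invL l

def pmL : List ℤ → ℤ
  | [] => 0
  | x :: l => (l.map (fun y => min x y)).sum + pmL l

lemma invL_append (A l : List ℤ) :
    invL (A ++ l) = invL A + (A.map fun a => l.countP (fun y => decide (a < y))).sum + invL l := by
  induction A with
  | nil => simp [invL]
  | cons a A ih =>
    simp only [List.cons_append, invL, List.append_eq, ih, List.countP_append, List.map_cons,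
      List.sum_cons]
    omega

lemma pmL_append (A l : List ℤ) :
    pmL (A ++ l) = pmL A + (A.map fun a => (l.map (fun y => min a y)).sum).sum + pmL l := by
  induction A with
  | nil => simp [pmL]
  | cons a A ih =>
    simp only [List.cons_append, pmL, List.append_eq, ih, List.map_append, List.sum_append,
      List.map_cons, List.sum_cons]
    ring

lemma countP_cons₂ (p : ℤ → Bool) (x y : ℤ) (l : List ℤ) :
    (x :: y :: l).countP p = (y :: x :: l).countP p := by
  simp only [List.countP_cons]; omega

lemma invL_swap_formula (A B : List ℤ) (x y : ℤ) :
    invL (A ++ x :: y :: B) + (if y < x then 1 else 0)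
      = invL (A ++ y :: x :: B) + (if x < y then 1 else 0) := by
  rw [invL_append, invL_append]
  have hc : (A.map fun a => (x :: y :: B).countP (fun z => decide (a < z))).sum
      = (A.map fun a => (y :: x :: B).countP (fun z => decide (a < z))).sum := by
    congr 1
    exact List.map_congr_left fun a _ => countP_cons₂ _ _ _ _
  rw [hc]
  simp only [invL, List.countP_cons]
  rcases lt_trichotomy x y with h | h | h
  · simp [h, not_lt.2 h.le]; omega
  · simp [h, lt_irrefl]
  · simp [h, not_lt.2 h.le]; omega

lemma invL_swap (A B : List ℤ) {x y : ℤ} (h : x < y) :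
    invL (A ++ x :: y :: B) = invL (A ++ y :: x :: B) + 1 := by
  have := invL_swap_formula A B x y
  simp [h, not_lt.2 h.le] at this
  omega

lemma invL_swap_le (A B : List ℤ) (x y : ℤ) :
    invL (A ++ x :: y :: B) ≤ invL (A ++ y :: x :: B) + 1 := by
  have := invL_swap_formula A B x y
  split_ifs at this <;> omega

lemma pmL_swap (A B : List ℤ) (x y : ℤ) :
    pmL (A ++ x :: y :: B) = pmL (A ++ y :: x :: B) := by
  rw [pmL_append, pmL_append]
  have hc : (A.map fun a => ((x :: y :: B).map (fun z => min a z)).sum).sum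
      = (A.map fun a => ((y :: x :: B).map (fun z => min a z)).sum).sum := by
    congr 1
    refine List.map_congr_left fun a _ => ?_
    simp only [List.map_cons, List.sum_cons]; ring
  rw [hc]
  simp only [pmL, List.map_cons, List.sum_cons, min_comm x y]
  ring

/-! ### `piMin = invL` -/

lemma invL_eq_zero_iff_sorted {l : List ℤ} : invL l = 0 ↔ l.Pairwise (· ≥ ·) := by
  induction l with
  | nil => simp [invL]
  | cons a l ih =>
    rw [List.pairwise_cons, ← ih]
    simp only [invL, Nat.add_eq_zero, List.countP_eq_zero]
    constructor
    · rintro ⟨h1, h2⟩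
      exact ⟨fun b hb => not_lt.1 (fun h => by simpa using h1 b hb (by simpa using h)), h2⟩
    · rintro ⟨h1, h2⟩
      exact ⟨fun b hb => by simpa using not_lt.2 (h1 b hb), h2⟩

lemma exists_swap_of_not_sorted {l : List ℤ} (h : ¬ l.Pairwise (· ≥ ·)) :
    ∃ A x y B, l = A ++ x :: y :: B ∧ x < y := by
  induction l with
  | nil => exact absurd List.Pairwise.nil h
  | cons a l ih =>
    by_cases hl : l.Pairwise (· ≥ ·)
    · have hna : ¬ ∀ b ∈ l, a ≥ b := fun hall => h (List.pairwise_cons.2 ⟨hall, hl⟩)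
      push_neg at hna
      obtain ⟨b, hb, hab⟩ := hna
      match l, hl, hb, hab with
      | c :: l', hl, hb, hab =>
        by_cases hac : a < c
        · exact ⟨[], a, c, l', rfl, hac⟩
        · exfalso
          rcases List.mem_cons.1 hb with rfl | hb'
          · exact hac hab
          · have h1 := List.rel_of_pairwise_cons hl hb'
            have h2 : b ≤ a := le_trans h1 (not_lt.1 hac)
            exact absurd hab (not_lt.2 h2)
    · obtain ⟨A, x, y, B, rfl, hxy⟩ := ih hl
      exact ⟨a :: A, x, y, B, rfl, hxy⟩

lemma sortCost_le {l : List ℤ} : ∀ n, n ∈ SortCost l → invL l ≤ n := by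
  intro n
  induction n generalizing l with
  | zero =>
    rintro ⟨f, h0, _, hs⟩
    rw [h0] at hs
    exact le_of_eq (invL_eq_zero_iff_sorted.2 hs)
  | succ n ih =>
    rintro ⟨f, h0, hswap, hs⟩
    have h1 : invL (f 1) ≤ n := by
      refine ih ⟨fun i => f (i + 1), rfl, fun i hi => hswap (i + 1) (by omega), hs⟩
    have h2 : AdjSwap (f 0) (f 1) := hswap 0 (by omega)
    obtain ⟨A, x, y, B, he, he'⟩ := h2
    have h3 : invL (f 0) ≤ invL (f 1) + 1 := by rw [he, he']; exact invL_swap_le A B x y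
    rw [← h0]
    omega

lemma invL_mem_sortCost (l : List ℤ) : invL l ∈ SortCost l := by
  generalize hn : invL l = n
  induction n generalizing l with
  | zero =>
    exact ⟨fun _ => l, rfl, fun i hi => by omega, invL_eq_zero_iff_sorted.1 hn⟩
  | succ n ih =>
    have hns : ¬ l.Pairwise (· ≥ ·) := fun hs => by
      rw [invL_eq_zero_iff_sorted.2 hs] at hn; omega
    obtain ⟨A, x, y, B, rfl, hxy⟩ := exists_swap_of_not_sorted hns
    have hl' : invL (A ++ y :: x :: B) = n := by
      have := invL_swap A B hxy; omega
    obtain ⟨f, h0, hswap, hs⟩ := ih _ hl'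
    refine ⟨fun i => if i = 0 then A ++ x :: y :: B else f (i - 1), rfl, ?_, by simpa using hs⟩
    intro i hi
    rcases Nat.eq_zero_or_pos i with rfl | hpos
    · simpa [h0] using ⟨A, x, y, B, rfl, rfl⟩
    · have h1 : ¬ (i = 0) := by omega
      have h2 : ¬ (i + 1 = 0) := by omega
      simp only [h1, h2, if_false]
      have : i - 1 + 1 = i := by omega
      rw [show i + 1 - 1 = i - 1 + 1 by omega]
      exact hswap (i - 1) (by omega)

lemma piMin_eq_invL (l : List ℤ) : piMin l = invL l := by
  refine le_antisymm (Nat.sInf_le (invL_mem_sortCost l)) ?_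
  exact sortCost_le _ (Nat.sInf_mem ⟨invL l, invL_mem_sortCost l⟩)

/-! ### The sorted weighted sum -/

lemma pmL_perm {l l' : List ℤ} (h : l.Perm l') : pmL l = pmL l' := by
  induction h with
  | nil => rfl
  | cons x h ih =>
    simp only [pmL, ih, (h.map (fun y => min x y)).sum_eq]
  | swap x y l =>
    simp only [pmL, List.map_cons, List.sum_cons, min_comm x y]
    ring
  | trans _ _ ih1 ih2 => rw [ih1, ih2]

lemma sum_getD (l : List ℤ) : ∑ i ∈ Finset.range l.length, l.getD i 0 = l.sum := by
  induction l with
  | nil => simp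
  | cons a l ih =>
    rw [List.length_cons, Finset.sum_range_succ']
    simp only [List.getD_cons_succ, List.getD_cons_zero, ih, List.sum_cons]
    ring

lemma wsum_sorted {l : List ℤ} (h : l.Pairwise (· ≥ ·)) :
    ∑ i ∈ Finset.range l.length, (i : ℤ) * l.getD i 0 = pmL l := by
  induction l with
  | nil => simp [pmL]
  | cons a l ih =>
    rw [List.pairwise_cons] at h
    rw [List.length_cons, Finset.sum_range_succ']
    simp only [List.getD_cons_succ, List.getD_cons_zero, Nat.cast_zero, zero_mul, add_zero,
      Nat.cast_add, Nat.cast_one, pmL]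
    have hmap : (l.map fun y => min a y).sum = l.sum := by
      rw [List.map_congr_left (fun y hy => min_eq_right (h.1 y hy)),
        List.map_id'' fun _ => rfl]
    rw [hmap, ← ih h.2, ← sum_getD l]
    rw [← Finset.sum_add_distrib]
    congr 1; funext i; ring

lemma sorted_sum_eq (Mn : ℕ) (l : List ℤ) (hl : l.length = Mn + 1) :
    ∑ i ∈ Finset.range (Mn + 1), (sortedTuple l).getD i 0 * ((Mn : ℤ) - i)
      = Mn * l.sum - pmL l := by
  have hperm : (sortedTuple l).Perm l := l.perm_insertionSort _
  have hlen : (sortedTuple l).length = Mn + 1 := by rw [hperm.length_eq, hl]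
  have hsorted : (sortedTuple l).Pairwise (· ≥ ·) := l.pairwise_insertionSort _
  have h1 : ∑ i ∈ Finset.range (Mn + 1), (sortedTuple l).getD i 0 * ((Mn : ℤ) - i)
      = (Mn : ℤ) * (∑ i ∈ Finset.range (Mn+1), (sortedTuple l).getD i 0)
        - ∑ i ∈ Finset.range (Mn+1), (i : ℤ) * (sortedTuple l).getD i 0 := by
    rw [Finset.mul_sum, ← Finset.sum_sub_distrib]
    congr 1; funext i; ring
  rw [h1, ← hlen, sum_getD, wsum_sorted hsorted, hperm.sum_eq, pmL_perm hperm]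

/-! ### Auxiliary sum identities -/

lemma sum_map_ite (p : ℤ → Prop) [DecidablePred p] (l : List ℤ) :
    (l.map fun a => if p a then (1:ℤ) else 0).sum = l.countP (fun a => decide (p a)) := by
  induction l with
  | nil => simp
  | cons a l ih =>
    simp only [List.map_cons, List.sum_cons, List.countP_cons, ih]
    by_cases h : p a <;> simp [h] <;> ring

lemma sum_map_split (f g : ℤ → ℤ) (l : List ℤ) :
    (l.map fun a => f a + g a).sum = (l.map f).sum + (l.map g).sum := by
  induction l with
  | nil => simp
  | cons a l ih => simp only [List.map_cons, List.sum_cons, ih]; ring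

lemma countP_lt_add_countP_le (d : ℤ) (l : List ℤ) :
    l.countP (fun a => decide (a < d)) + l.countP (fun a => decide (d ≤ a)) = l.length := by
  induction l with
  | nil => simp
  | cons a l ih =>
    simp only [List.countP_cons, List.length_cons]
    by_cases h : a < d
    · simp [h, not_le.2 h]; omega
    · simp [h, not_lt.1 h]; omega

/-! ### Key identities for the macro transitions -/

lemma invL_snoc' (B : List ℤ) (d : ℤ) :
    (invL (B ++ [d]) : ℤ) = invL B + B.countP (fun a => decide (a < d)) := by
  induction B with
  | nil => simp [invL]
  | cons b B ih =>
    simp only [List.cons_append, invL, List.countP_append, List.countP_cons, Nat.cast_add,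
      List.countP_nil]
    push_cast [ih]
    by_cases h : b < d <;> simp [h] <;> linarith

lemma pmL_snoc (B : List ℤ) (d : ℤ) :
    pmL (B ++ [d]) = pmL B + (B.map fun a => min a d).sum := by
  rw [pmL_append]
  have h1 : pmL [d] = 0 := by simp [pmL]
  have h2 : (B.map fun a => (([d]).map (fun y => min a y)).sum).sum
      = (B.map fun a => min a d).sum := by
    congr 1
    exact List.map_congr_left fun a _ => by simp
  rw [h1, h2, add_zero]

lemma dm_key (B : List ℤ) (d : ℤ) :
    (invL (B ++ [d]) : ℤ) + 2 * pmL (B ++ [d])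
      = (invL ((d - 1) :: B) : ℤ) + 2 * pmL ((d - 1) :: B) + B.length := by
  have h1 := invL_snoc' B d
  have h2 := pmL_snoc B d
  have h3 : (invL ((d - 1) :: B) : ℤ) = B.countP (fun a => decide (d ≤ a)) + invL B := by
    simp only [invL]
    have : B.countP (fun y => decide (d - 1 < y)) = B.countP (fun a => decide (d ≤ a)) := by
      apply List.countP_congr
      intro a _
      simp only [decide_eq_true_eq]
      omega
    rw [this]; push_cast; ring
  have h4 : pmL ((d - 1) :: B) = (B.map fun y => min (d-1) y).sum + pmL B := rfl
  have h5 : (B.map fun a => min a d).sum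
      = (B.map fun y => min (d-1) y).sum + B.countP (fun a => decide (d ≤ a)) := by
    have : ∀ a : ℤ, min a d = min (d-1) a + (if d ≤ a then (1:ℤ) else 0) := by
      intro a
      by_cases h : d ≤ a
      · rw [min_eq_right h, min_eq_left (show d - 1 ≤ a by omega)]
        simp only [if_pos h]; ring
      · rw [min_eq_left (show a ≤ d by omega), min_eq_right (show a ≤ d - 1 by omega)]
        simp only [if_neg h]; ring
    rw [List.map_congr_left (fun a _ => this a), sum_map_split, sum_map_ite]
  have h6 := countP_lt_add_countP_le d B
  rw [h1, h2, h3, h4, h5]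
  push_cast at h6 ⊢
  linarith

lemma invL_map_add_one (B : List ℤ) : invL (B.map (· + 1)) = invL B := by
  induction B with
  | nil => rfl
  | cons b B ih =>
    simp only [List.map_cons, invL, ih, List.countP_map]
    congr 1
    apply List.countP_congr
    intro a _
    simp only [Function.comp_apply, decide_eq_true_eq]
    omega

lemma pmL_map_add_one (B : List ℤ) :
    2 * pmL (B.map (· + 1)) = 2 * pmL B + B.length * (B.length - 1) := by
  induction B with
  | nil => simp [pmL]
  | cons b B ih =>
    simp only [List.map_cons, pmL, List.length_cons]
    have h : ((B.map (· + 1)).map fun y => min (b+1) y).sum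
        = (B.map fun y => min b y).sum + B.length := by
      rw [List.map_map]
      have : ∀ a ∈ B, ((fun y => min (b+1) y) ∘ (· + 1)) a = min b a + 1 := by
        intro a _
        simp only [Function.comp_apply]
        rcases le_total a b with h | h
        · rw [min_eq_right h, min_eq_right (by omega : a + 1 ≤ b + 1)]
        · rw [min_eq_left h, min_eq_left (by omega : b + 1 ≤ a + 1)]
      rw [List.map_congr_left this, sum_map_split (fun y => min b y) (fun _ => 1)]
      simp [mul_comm]
    rw [h]
    push_cast
    ring_nf
    ring_nf at ih
    linarith

lemma bp_key (B : List ℤ) (d : ℤ) :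
    (invL (d :: B.map (· + 1)) : ℤ) + 2 * pmL (d :: B.map (· + 1))
      = (invL (B ++ [d]) : ℤ) + 2 * pmL (B ++ [d]) + (B.length : ℤ) ^ 2 := by
  have h1 := invL_snoc' B d
  have h2 := pmL_snoc B d
  have h3 : (invL (d :: B.map (· + 1)) : ℤ)
      = B.countP (fun a => decide (d ≤ a)) + invL B := by
    simp only [invL, invL_map_add_one, List.countP_map]
    have : B.countP ((fun y => decide (d < y)) ∘ (· + 1)) = B.countP (fun a => decide (d ≤ a)) := by
      apply List.countP_congr
      intro a _
      simp only [Function.comp_apply, decide_eq_true_eq]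
      omega
    rw [this]; push_cast; ring
  have h4 : pmL (d :: B.map (· + 1))
      = (B.map fun a => min d a).sum + (B.countP (fun a => decide (a < d)) : ℤ)
        + pmL (B.map (· + 1)) := by
    show ((B.map (· + 1)).map fun y => min d y).sum + pmL (B.map (· + 1)) = _
    congr 1
    rw [List.map_map]
    have : ∀ a ∈ B, ((fun y => min d y) ∘ (· + 1)) a
        = min d a + (if a < d then (1:ℤ) else 0) := by
      intro a _
      simp only [Function.comp_apply]
      by_cases h : a < d
      · rw [min_eq_right (by omega : a + 1 ≤ d), min_eq_right (by omega : a ≤ d), if_pos h]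
      · rw [min_eq_left (by omega : d ≤ a + 1), min_eq_left (by omega : d ≤ a), if_neg h]
        ring
    rw [List.map_congr_left this, sum_map_split, sum_map_ite]
  have h5 := pmL_map_add_one B
  have h6 := countP_lt_add_countP_le d B
  have h8 : (B.map fun a => min a d).sum = (B.map fun a => min d a).sum := by
    rw [List.map_congr_left (fun a _ => min_comm a d)]
  rw [h3, h4, h1, h2, h8]
  push_cast at h6 ⊢
  nlinarith [h5, h6]

/-! ### The tuple of a state -/

lemma insertIdx_len (A rest : List ℤ) (d : ℤ) :
    (A ++ rest).insertIdx A.length d = A ++ d :: rest := by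
  induction A with
  | nil => rfl
  | cons a A ih => simp [List.insertIdx_succ_cons, ih]

def bList (M : ℕ) (b : ℕ → ℤ) : List ℤ := (List.range M).map fun m => b (m + 1)

def tailL (M : ℕ) (b : ℕ → ℤ) (k : ℕ) : List ℤ :=
  (List.range (M - k - 1)).map fun j => b (k + 1 + j + 1)

lemma bList_length (M : ℕ) (b : ℕ → ℤ) : (bList M b).length = M := by
  simp [bList]

lemma bList_sum (M : ℕ) (b : ℕ → ℤ) :
    (bList M b).sum = ∑ m ∈ Finset.range M, b (m + 1) := rfl

lemma sum_insertIdx (a : ℤ) : ∀ (k : ℕ) (l : List ℤ), k ≤ l.length →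
    (l.insertIdx k a).sum = a + l.sum
  | 0, l, _ => by simp
  | k + 1, [], h => by simp at h
  | k + 1, x :: l, h => by
    simp only [List.insertIdx_succ_cons, List.sum_cons,
      sum_insertIdx a k l (by simpa using h)]
    ring

lemma tuple_def (M : ℕ) (s : St M) : tuple s = (bList M s.b).insertIdx (s.t - 1) s.d := rfl

lemma tuple_length {M : ℕ} (s : St M) : (tuple s).length = M + 1 := by
  rw [tuple_def, List.length_insertIdx_of_le_length (by rw [bList_length]; have := s.ht2; omega) _,
    bList_length]

lemma tuple_sum {M : ℕ} (s : St M) : (tuple s).sum = -s.T := by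
  rw [tuple_def, sum_insertIdx _ _ _ (by rw [bList_length]; have := s.ht2; omega), bList_sum]
  have := s.inv
  linarith

/-- Closed form for the class function. -/
lemma Kc_closed {M : ℕ} (s : St M) :
    Kc s = -(invL (tuple s) : ℤ) - M * s.T - 2 * pmL (tuple s) := by
  rw [Kc, piMin_eq_invL, sorted_sum_eq M (tuple s) (tuple_length s), tuple_sum]
  ring

lemma bList_decomp (M : ℕ) (b : ℕ → ℤ) (k : ℕ) (hk : k < M) :
    bList M b = bList k b ++ b (k + 1) :: tailL M b k := by
  have h1 : M = k + (M - k - 1 + 1) := by omega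
  rw [bList, h1, List.range_add, List.map_append, List.range_succ_eq_map]
  simp only [List.map_cons, List.map_map, bList, tailL]
  congr 1
  rw [show k + (M - k - 1 + 1) - k - 1 = M - k - 1 by omega]
  congr 1
  refine List.map_congr_left fun j _ => ?_
  simp only [Function.comp_apply, Nat.succ_eq_add_one]
  congr 1
  omega

lemma insertIdx_len_succ (A rest : List ℤ) (c d : ℤ) :
    (A ++ c :: rest).insertIdx (A.length + 1) d = A ++ c :: d :: rest := by
  have h := insertIdx_len (A ++ [c]) rest d
  simpa using h

lemma tuple_succ1 {M : ℕ} (w : St M) (k : ℕ) (hk : k < M) (ht : w.t = k + 1) :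
    tuple w = bList k w.b ++ w.d :: w.b (k + 1) :: tailL M w.b k := by
  have h := insertIdx_len (bList k w.b) (w.b (k + 1) :: tailL M w.b k) w.d
  rw [bList_length] at h
  rw [tuple_def, ht, Nat.add_sub_cancel, bList_decomp M w.b k hk, h]

lemma tuple_succ2 {M : ℕ} (w : St M) (k : ℕ) (hk : k < M) (ht : w.t = k + 2) :
    tuple w = bList k w.b ++ w.b (k + 1) :: w.d :: tailL M w.b k := by
  have h := insertIdx_len_succ (bList k w.b) (tailL M w.b k) (w.b (k + 1)) w.d
  rw [bList_length] at h
  rw [tuple_def, ht, show k + 2 - 1 = k + 1 by omega, bList_decomp M w.b k hk, h]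

lemma tuple_last {M : ℕ} (w : St M) (ht : w.t = M + 1) :
    tuple w = bList M w.b ++ [w.d] := by
  have h := List.insertIdx_length_self (l := bList M w.b) (x := w.d)
  rw [bList_length] at h
  rw [tuple_def, ht, Nat.add_sub_cancel, h]

lemma tuple_first {M : ℕ} (w : St M) (ht : w.t = 1) :
    tuple w = w.d :: bList M w.b := by
  rw [tuple_def, ht]
  rfl

lemma bList_congr {n : ℕ} {b b' : ℕ → ℤ} (h : ∀ m, 1 ≤ m → m ≤ n → b m = b' m) :
    bList n b = bList n b' :=
  List.map_congr_left fun m hm => h (m + 1) (by omega)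
    (by have := List.mem_range.1 hm; omega)

lemma tailL_congr {M k : ℕ} {b b' : ℕ → ℤ} (h : ∀ m, k + 1 < m → m ≤ M → b m = b' m) :
    tailL M b k = tailL M b' k :=
  List.map_congr_left fun j hj => h (k + 1 + j + 1) (by omega)
    (by have := List.mem_range.1 hj; omega)

/-! ### small state lemmas -/

lemma St.ext' {M : ℕ} {s₁ s₂ : St M} (hb : s₁.b = s₂.b) (hd : s₁.d = s₂.d)
    (hT : s₁.T = s₂.T) (ht : s₁.t = s₂.t) : s₁ = s₂ := by
  cases s₁; cases s₂
  simp only at hb hd hT ht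
  subst hb; subst hd; subst hT; subst ht
  rfl

lemma sum_update_range (M : ℕ) (b : ℕ → ℤ) (k : ℕ) (hk : k < M) (v : ℤ) :
    ∑ m ∈ Finset.range M, (Function.update b (k + 1) v) (m + 1)
      = (∑ m ∈ Finset.range M, b (m + 1)) - b (k + 1) + v := by
  have h : ∀ m ∈ Finset.range M, (Function.update b (k + 1) v) (m + 1)
      = b (m + 1) + (if m = k then v - b (k + 1) else 0) := by
    intro m _
    rcases eq_or_ne m k with rfl | hm
    · simp [Function.update_self]
    · rw [Function.update_of_ne (by omega), if_neg hm, add_zero]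
  rw [Finset.sum_congr rfl h, Finset.sum_add_distrib,
    Finset.sum_ite_eq' (Finset.range M) k, if_pos (Finset.mem_range.2 hk)]
  ring

/-! ### Tmat evaluation helpers -/

lemma Tmat_eq_zero {M q : ℕ} {w v : St M} (h : ∀ a, ¬ Step w a v) : Tmat M q w v = 0 := by
  rw [Tmat, if_neg (h .D), if_neg (h .I), if_neg]
  rintro (h' | h' | h' | h')
  exacts [h _ h', h _ h', h _ h', h _ h']

lemma Tmat_eq_one {M q : ℕ} {w v : St M} (hD : ¬ Step w .D v) (hI : ¬ Step w .I v)
    (h : Step w .Ne v ∨ Step w .Nl v ∨ Step w .dm v ∨ Step w .bp v) :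
    Tmat M q w v = 1 := by
  rw [Tmat, if_neg hD, if_neg hI, if_pos h]

lemma Tmat_eq_D {M q : ℕ} {w v : St M} (h : Step w .D v) :
    Tmat M q w v = ((q : ℝ≥0∞) - 1) / q := by
  rw [Tmat, if_pos h]

lemma Tmat_eq_I {M q : ℕ} {w v : St M} (hD : ¬ Step w .D v) (h : Step w .I v) :
    Tmat M q w v = 1 / q := by
  rw [Tmat, if_neg hD, if_pos h]

/-! ### tsum helpers -/

lemma SS.ext {M : ℕ} {x y : SS M} (h : x.1 = y.1) : x = y := Subtype.ext h

lemma tsum_single_pred {M q : ℕ} (v : St M) (p : St M) (hp : inS p)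
    (huniq : ∀ w : St M, inS w → w ≠ p → Tmat M q w v = 0) :
    ∑' s : SS M, Tmat M q s.1 v * (q : ℝ≥0∞) ^ (-(Kc s.1))
      = Tmat M q p v * (q : ℝ≥0∞) ^ (-(Kc p)) := by
  refine tsum_eq_single (f := fun s : SS M => Tmat M q s.1 v * (q : ℝ≥0∞) ^ (-(Kc s.1))) (⟨p, hp⟩ : SS M) ?_
  intro b hb
  have hb' : b.1 ≠ p := fun h => hb (SS.ext h)
  rw [huniq b.1 b.2 hb', zero_mul]

lemma tsum_two_pred {M q : ℕ} (v : St M) (p₁ p₂ : St M) (h₁ : inS p₁) (h₂ : inS p₂)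
    (hne : p₁ ≠ p₂)
    (huniq : ∀ w : St M, inS w → w ≠ p₁ → w ≠ p₂ → Tmat M q w v = 0) :
    ∑' s : SS M, Tmat M q s.1 v * (q : ℝ≥0∞) ^ (-(Kc s.1))
      = Tmat M q p₁ v * (q : ℝ≥0∞) ^ (-(Kc p₁))
        + Tmat M q p₂ v * (q : ℝ≥0∞) ^ (-(Kc p₂)) := by
  have hne12 : (⟨p₁, h₁⟩ : SS M) ≠ (⟨p₂, h₂⟩ : SS M) := fun h => hne (congrArg Subtype.val h)
  have hsplit : ∀ b : SS M, Tmat M q b.1 v * (q : ℝ≥0∞) ^ (-(Kc b.1))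
      = (if b = (⟨p₁, h₁⟩ : SS M) then Tmat M q p₁ v * (q : ℝ≥0∞) ^ (-(Kc p₁)) else 0)
        + (if b = (⟨p₂, h₂⟩ : SS M) then Tmat M q p₂ v * (q : ℝ≥0∞) ^ (-(Kc p₂)) else 0) := by
    intro b
    by_cases e1 : b = (⟨p₁, h₁⟩ : SS M)
    · subst e1
      erw [if_pos rfl, if_neg hne12, add_zero]
    · by_cases e2 : b = (⟨p₂, h₂⟩ : SS M)
      · subst e2
        erw [if_pos rfl, if_neg (by intro h; exact hne12 h.symm), zero_add]
      · rw [if_neg e1, if_neg e2, add_zero,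
          huniq b.1 b.2 (fun h => e1 (SS.ext h)) (fun h => e2 (SS.ext h)), zero_mul]
  rw [tsum_congr hsplit, Summable.tsum_add ENNReal.summable ENNReal.summable]
  exact congrArg₂ (· + ·) (tsum_ite_eq _ _) (tsum_ite_eq _ _)

/-! ### ENNReal arithmetic -/

lemma enn_single {q : ℕ} (hq : 2 ≤ q) (c : ℤ) :
    (1 / (q : ℝ≥0∞)) * (q : ℝ≥0∞) ^ (c + 1) = (q : ℝ≥0∞) ^ c := by
  have hq0 : (q : ℝ≥0∞) ≠ 0 := Nat.cast_ne_zero.2 (by omega)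
  have hqt : (q : ℝ≥0∞) ≠ ⊤ := ENNReal.natCast_ne_top q
  rw [ENNReal.zpow_add hq0 hqt c 1, zpow_one, one_div]
  calc (q : ℝ≥0∞)⁻¹ * ((q : ℝ≥0∞) ^ c * q) = (q : ℝ≥0∞) ^ c * ((q : ℝ≥0∞)⁻¹ * q) := by ring
    _ = (q : ℝ≥0∞) ^ c := by rw [ENNReal.inv_mul_cancel hq0 hqt, mul_one]

lemma enn_pair {q : ℕ} (hq : 2 ≤ q) (c : ℤ) :
    (q : ℝ≥0∞) ^ (c - 1) + ((q : ℝ≥0∞) - 1) / q * (q : ℝ≥0∞) ^ c = (q : ℝ≥0∞) ^ c := by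
  have hq0 : (q : ℝ≥0∞) ≠ 0 := Nat.cast_ne_zero.2 (by omega)
  have hqt : (q : ℝ≥0∞) ≠ ⊤ := ENNReal.natCast_ne_top q
  have h1 : (1 : ℝ≥0∞) ≤ (q : ℝ≥0∞) := by
    have : ((1 : ℕ) : ℝ≥0∞) ≤ (q : ℝ≥0∞) := Nat.cast_le.2 (by omega)
    simpa using this
  have hsub : ((q : ℝ≥0∞) - 1) + 1 = q := tsub_add_cancel_of_le h1
  have hc : (q : ℝ≥0∞) ^ c = (q : ℝ≥0∞) ^ (c - 1) * q := by
    conv_lhs => rw [show c = c - 1 + 1 by ring]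
    rw [ENNReal.zpow_add hq0 hqt (c - 1) 1, zpow_one]
  rw [hc]
  calc (q : ℝ≥0∞) ^ (c - 1) + ((q : ℝ≥0∞) - 1) / q * ((q : ℝ≥0∞) ^ (c - 1) * q)
      = (q : ℝ≥0∞) ^ (c - 1) + ((q : ℝ≥0∞) - 1) * ((q : ℝ≥0∞)⁻¹ * q) * (q : ℝ≥0∞) ^ (c - 1) := by
        rw [div_eq_mul_inv]; ring
    _ = (q : ℝ≥0∞) ^ (c - 1) * (1 + ((q : ℝ≥0∞) - 1)) := by
        rw [ENNReal.inv_mul_cancel hq0 hqt]; ring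
    _ = (q : ℝ≥0∞) ^ (c - 1) * q := by rw [add_comm, hsub]

end BDM

namespace BDM

/-! ### The five predecessor cases -/

lemma case_dm (M q : ℕ) (hM : 1 ≤ M) (hq : 2 ≤ q) (v : St M) (hv : inS v)
    (ht1 : v.t = 1) (hTz : v.T ≠ 0) :
    ∑' s : SS M, Tmat M q s.1 v * (q : ℝ≥0∞) ^ (-(Kc s.1)) = (q : ℝ≥0∞) ^ (-(Kc v)) := by
  obtain ⟨hT0, hTM⟩ := hv
  set p : St M := ⟨v.b, v.d + 1, v.T - 1, M + 1, by omega, le_refl _, v.hb0,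
    by have := v.inv; linarith⟩ with hp
  have hpb : p.b = v.b := rfl
  have hpd : p.d = v.d + 1 := rfl
  have hpT : p.T = v.T - 1 := rfl
  have hpt : p.t = M + 1 := rfl
  have hstep : Step p .dm v :=
    ⟨rfl, by show v.T - 1 < (M : ℤ); omega, ht1, by show v.T = v.T - 1 + 1; ring,
      by show v.d = v.d + 1 - 1; ring, rfl⟩
  have hTmat : Tmat M q p v = 1 :=
    Tmat_eq_one (fun h => by have h1 : M + 1 ≤ M := h.1; omega)
      (fun h => by have h1 : M + 1 ≤ M := h.1; omega)
      (Or.inr (Or.inr (Or.inl hstep)))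
  have hK : Kc p = Kc v := by
    rw [Kc_closed p, Kc_closed v, tuple_last p hpt, tuple_first v ht1, hpb, hpd, hpT]
    have hkey := dm_key (bList M v.b) (v.d + 1)
    rw [show (v.d + 1 - 1) = v.d by ring, bList_length] at hkey
    push_cast at hkey ⊢
    linarith
  have huniq : ∀ w : St M, inS w → w ≠ p → Tmat M q w v = 0 := by
    intro w hw hwp
    apply Tmat_eq_zero
    intro a
    cases a with
    | D => intro h; have h3 := h.2.2.1; have h4 := w.ht1; omega
    | I => intro h; have h3 := h.2.2.1; have h4 := w.ht1; omega
    | Ne => intro h; have h3 := h.2.2.1; have h4 := w.ht1; omega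
    | Nl => intro h; have h3 := h.2.2.1; have h4 := w.ht1; omega
    | dm =>
      rintro ⟨c1, c2, c3, c4, c5, c6⟩
      refine hwp (St.ext' c6.symm ?_ ?_ c1)
      · show w.d = v.d + 1; omega
      · show w.T = v.T - 1; omega
    | bp =>
      rintro ⟨c1, c2, c3, c4, c5, c6⟩
      exact hTz c4
  rw [tsum_single_pred v p ⟨by rw [hpT]; omega, by rw [hpT]; omega⟩ huniq, hTmat, hK, one_mul]

lemma case_bp (M q : ℕ) (hM : 1 ≤ M) (hq : 2 ≤ q) (v : St M) (hv : inS v)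
    (ht1 : v.t = 1) (hTz : v.T = 0) :
    ∑' s : SS M, Tmat M q s.1 v * (q : ℝ≥0∞) ^ (-(Kc s.1)) = (q : ℝ≥0∞) ^ (-(Kc v)) := by
  have hsum : ∑ m ∈ Finset.range M, (if 1 ≤ m + 1 ∧ m + 1 ≤ M then v.b (m + 1) - 1 else 0)
      = (∑ m ∈ Finset.range M, v.b (m + 1)) - M := by
    rw [Finset.sum_congr rfl (fun m hm => if_pos
        ⟨by omega, by have := Finset.mem_range.1 hm; omega⟩),
      Finset.sum_sub_distrib, Finset.sum_const, Finset.card_range]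
    simp
  set p : St M := ⟨fun m => if 1 ≤ m ∧ m ≤ M then v.b m - 1 else 0,
    v.d, (M : ℤ), M + 1, by omega, le_refl _,
    fun m hm => if_neg (by omega),
    by
      show v.d + (M : ℤ) + ∑ m ∈ Finset.range M,
        (if 1 ≤ m + 1 ∧ m + 1 ≤ M then v.b (m + 1) - 1 else 0) = 0
      rw [hsum]
      have hinv := v.inv
      rw [hTz] at hinv
      linarith⟩ with hp
  have hpb : p.b = fun m => if 1 ≤ m ∧ m ≤ M then v.b m - 1 else 0 := rfl
  have hpd : p.d = v.d := rfl
  have hpT : p.T = (M : ℤ) := rfl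
  have hpt : p.t = M + 1 := rfl
  have hbp : ∀ m, 1 ≤ m → m ≤ M → p.b m = v.b m - 1 := fun m h1 h2 => by
    show (if 1 ≤ m ∧ m ≤ M then v.b m - 1 else 0) = v.b m - 1
    exact if_pos ⟨h1, h2⟩
  have hstep : Step p .bp v := by
    refine ⟨rfl, rfl, ht1, hTz, rfl, ?_⟩
    funext m
    by_cases hm : 1 ≤ m ∧ m ≤ M
    · rw [if_pos hm, hbp m hm.1 hm.2]; ring
    · rw [if_neg hm]; exact v.hb0 m (by omega)
  have hTmat : Tmat M q p v = 1 :=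
    Tmat_eq_one (fun h => by have h1 : M + 1 ≤ M := h.1; omega)
      (fun h => by have h1 : M + 1 ≤ M := h.1; omega)
      (Or.inr (Or.inr (Or.inr hstep)))
  have hK : Kc p = Kc v := by
    have hmap : bList M v.b = (bList M p.b).map (· + 1) := by
      rw [bList, bList, List.map_map]
      refine List.map_congr_left fun m hm => ?_
      have hmlt := List.mem_range.1 hm
      simp only [Function.comp_apply]
      rw [hbp (m + 1) (by omega) (by omega)]
      ring
    have hkey := bp_key (bList M p.b) v.d
    rw [bList_length] at hkey
    rw [Kc_closed p, Kc_closed v, tuple_last p hpt, tuple_first v ht1, hmap, hpd, hpT, hTz]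
    have hsq : ((M : ℤ)) ^ 2 = (M : ℤ) * (M : ℤ) := by ring
    push_cast at hkey ⊢
    linarith
  have huniq : ∀ w : St M, inS w → w ≠ p → Tmat M q w v = 0 := by
    intro w hw hwp
    apply Tmat_eq_zero
    intro a
    cases a with
    | D => intro h; have h3 := h.2.2.1; have h4 := w.ht1; omega
    | I => intro h; have h3 := h.2.2.1; have h4 := w.ht1; omega
    | Ne => intro h; have h3 := h.2.2.1; have h4 := w.ht1; omega
    | Nl => intro h; have h3 := h.2.2.1; have h4 := w.ht1; omega
    | dm =>
      rintro ⟨c1, c2, c3, c4, c5, c6⟩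
      have := hw.1
      rw [hTz] at c4
      omega
    | bp =>
      rintro ⟨c1, c2, c3, c4, c5, c6⟩
      refine hwp (St.ext' ?_ c5.symm (by rw [hpT]; exact c2) c1)
      funext m
      by_cases hm : 1 ≤ m ∧ m ≤ M
      · have h6 := congrFun c6 m
        rw [if_pos hm] at h6
        rw [hbp m hm.1 hm.2]
        omega
      · rw [w.hb0 m (by omega)]
        show (0 : ℤ) = if 1 ≤ m ∧ m ≤ M then v.b m - 1 else 0
        rw [if_neg hm]
  rw [tsum_single_pred v p ⟨by rw [hpT]; positivity, by rw [hpT]⟩ huniq, hTmat, hK, one_mul]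

lemma case_eq (M q : ℕ) (hq : 2 ≤ q) (v : St M) (hv : inS v) (k : ℕ) (hk : k < M)
    (ht : v.t = k + 2) (hxy : v.b (k + 1) = v.d) :
    ∑' s : SS M, Tmat M q s.1 v * (q : ℝ≥0∞) ^ (-(Kc s.1)) = (q : ℝ≥0∞) ^ (-(Kc v)) := by
  set p : St M := ⟨v.b, v.d, v.T, k + 1, by omega, by omega, v.hb0, v.inv⟩ with hp
  have hpb : p.b = v.b := rfl
  have hpd : p.d = v.d := rfl
  have hpT : p.T = v.T := rfl
  have hstep : Step p .Ne v := ⟨by show k + 1 ≤ M; omega, hxy, ht, rfl, rfl, rfl⟩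
  have hTmat : Tmat M q p v = 1 := by
    refine Tmat_eq_one ?_ ?_ (Or.inl hstep)
    · intro h
      have h2 : v.d < v.b (k + 1) := h.2.1
      omega
    · intro h
      have h2 : v.d < v.b (k + 1) := h.2.1
      omega
  have hK : Kc p = Kc v := by
    rw [Kc_closed p, Kc_closed v, tuple_succ1 p k hk rfl, tuple_succ2 v k hk ht,
      hpb, hpd, hpT, hxy]
  have huniq : ∀ w : St M, inS w → w ≠ p → Tmat M q w v = 0 := by
    intro w hw hwp
    apply Tmat_eq_zero
    intro a
    cases a with
    | D =>
      rintro ⟨c1, c2, c3, c4, c5, c6⟩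
      have hwt : w.t = k + 1 := by omega
      rw [hwt] at c2 c5 c6
      have h6 := congrFun c6 (k + 1)
      rw [Function.update_self] at h6
      omega
    | I =>
      rintro ⟨c1, c2, c3, c4, c5, c6⟩
      have hwt : w.t = k + 1 := by omega
      rw [hwt] at c2
      have h6 := congrFun c6 (k + 1)
      omega
    | Ne =>
      rintro ⟨c1, c2, c3, c4, c5, c6⟩
      exact hwp (St.ext' c6.symm c5.symm c4.symm (by show w.t = k + 1; omega))
    | Nl =>
      rintro ⟨c1, c2, c3, c4, c5, c6⟩
      have hwt : w.t = k + 1 := by omega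
      rw [hwt] at c2
      have h6 := congrFun c6 (k + 1)
      omega
    | dm => rintro ⟨c1, c2, c3, c4, c5, c6⟩; omega
    | bp => rintro ⟨c1, c2, c3, c4, c5, c6⟩; omega
  rw [tsum_single_pred v p ⟨hv.1, hv.2⟩ huniq, hTmat, hK, one_mul]

lemma case_lt (M q : ℕ) (hq : 2 ≤ q) (v : St M) (hv : inS v) (k : ℕ) (hk : k < M)
    (ht : v.t = k + 2) (hyx : v.d < v.b (k + 1)) :
    ∑' s : SS M, Tmat M q s.1 v * (q : ℝ≥0∞) ^ (-(Kc s.1)) = (q : ℝ≥0∞) ^ (-(Kc v)) := by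
  set p : St M := ⟨v.b, v.d, v.T, k + 1, by omega, by omega, v.hb0, v.inv⟩ with hp
  have hpb : p.b = v.b := rfl
  have hpd : p.d = v.d := rfl
  have hpT : p.T = v.T := rfl
  have hstep : Step p .I v := ⟨by show k + 1 ≤ M; omega, hyx, ht, rfl, rfl, rfl⟩
  have hD : ¬ Step p .D v := by
    intro h
    have h5 : v.d = v.b (k + 1) := h.2.2.2.2.1
    omega
  have hTmat : Tmat M q p v = 1 / q := Tmat_eq_I hD hstep
  have hK : Kc p = Kc v - 1 := by
    rw [Kc_closed p, Kc_closed v, tuple_succ1 p k hk rfl, tuple_succ2 v k hk ht,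
      hpb, hpd, hpT]
    have hi := invL_swap (bList k v.b) (tailL M v.b k) hyx
    have hpm := pmL_swap (bList k v.b) (tailL M v.b k) v.d (v.b (k + 1))
    rw [hi, hpm]
    push_cast
    ring
  have huniq : ∀ w : St M, inS w → w ≠ p → Tmat M q w v = 0 := by
    intro w hw hwp
    apply Tmat_eq_zero
    intro a
    cases a with
    | D =>
      rintro ⟨c1, c2, c3, c4, c5, c6⟩
      have hwt : w.t = k + 1 := by omega
      rw [hwt] at c2 c5 c6
      have h6 := congrFun c6 (k + 1)
      rw [Function.update_self] at h6
      omega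
    | I =>
      rintro ⟨c1, c2, c3, c4, c5, c6⟩
      exact hwp (St.ext' c6.symm c5.symm c4.symm (by show w.t = k + 1; omega))
    | Ne =>
      rintro ⟨c1, c2, c3, c4, c5, c6⟩
      have hwt : w.t = k + 1 := by omega
      rw [hwt] at c2
      have h6 := congrFun c6 (k + 1)
      omega
    | Nl =>
      rintro ⟨c1, c2, c3, c4, c5, c6⟩
      have hwt : w.t = k + 1 := by omega
      rw [hwt] at c2
      have h6 := congrFun c6 (k + 1)
      omega
    | dm => rintro ⟨c1, c2, c3, c4, c5, c6⟩; omega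
    | bp => rintro ⟨c1, c2, c3, c4, c5, c6⟩; omega
  rw [tsum_single_pred v p ⟨hv.1, hv.2⟩ huniq, hTmat, hK,
    show -(Kc v - 1) = -Kc v + 1 by ring, enn_single hq (-Kc v)]

lemma case_gt (M q : ℕ) (hq : 2 ≤ q) (v : St M) (hv : inS v) (k : ℕ) (hk : k < M)
    (ht : v.t = k + 2) (hxy : v.b (k + 1) < v.d) :
    ∑' s : SS M, Tmat M q s.1 v * (q : ℝ≥0∞) ^ (-(Kc s.1)) = (q : ℝ≥0∞) ^ (-(Kc v)) := by
  set p₁ : St M := ⟨v.b, v.d, v.T, k + 1, by omega, by omega, v.hb0, v.inv⟩ with hp₁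
  set p₂ : St M := ⟨Function.update v.b (k + 1) v.d, v.b (k + 1), v.T, k + 1,
    by omega, by omega,
    fun m hm => by
      rw [Function.update_of_ne (by omega : m ≠ k + 1)]
      exact v.hb0 m hm,
    by
      show v.b (k + 1) + v.T + ∑ m ∈ Finset.range M,
        (Function.update v.b (k + 1) v.d) (m + 1) = 0
      rw [sum_update_range M v.b k hk v.d]
      have := v.inv
      linarith⟩ with hp₂
  have hp₁b : p₁.b = v.b := rfl
  have hp₁d : p₁.d = v.d := rfl
  have hp₁T : p₁.T = v.T := rfl
  have hp₂b : p₂.b = Function.update v.b (k + 1) v.d := rfl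
  have hp₂d : p₂.d = v.b (k + 1) := rfl
  have hp₂T : p₂.T = v.T := rfl
  have hmid : p₂.b (k + 1) = v.d := by
    rw [hp₂b]; exact Function.update_self _ _ _
  have hne : p₁ ≠ p₂ := by
    intro h
    have : p₁.d = p₂.d := congrArg St.d h
    rw [hp₁d, hp₂d] at this
    omega
  have hstep₁ : Step p₁ .Nl v := ⟨by show k + 1 ≤ M; omega, hxy, ht, rfl, rfl, rfl⟩
  have hstep₂ : Step p₂ .D v := by
    refine ⟨by show k + 1 ≤ M; omega, ?_, ht, rfl, ?_, ?_⟩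
    · show p₂.d < p₂.b (k + 1)
      rw [hp₂d, hmid]; exact hxy
    · show v.d = p₂.b (k + 1)
      rw [hmid]
    · show v.b = Function.update p₂.b (k + 1) p₂.d
      rw [hp₂b, hp₂d, Function.update_idem, Function.update_eq_self]
  have hTmat₁ : Tmat M q p₁ v = 1 := by
    refine Tmat_eq_one ?_ ?_ (Or.inr (Or.inl hstep₁))
    · intro h
      have h5 : v.d = v.b (k + 1) := h.2.2.2.2.1
      omega
    · intro h
      have h2 : v.d < v.b (k + 1) := h.2.1
      omega
  have hTmat₂ : Tmat M q p₂ v = ((q : ℝ≥0∞) - 1) / q := Tmat_eq_D hstep₂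
  have hK₁ : Kc p₁ = Kc v + 1 := by
    rw [Kc_closed p₁, Kc_closed v, tuple_succ1 p₁ k hk rfl, tuple_succ2 v k hk ht,
      hp₁b, hp₁d, hp₁T]
    have hi := invL_swap (bList k v.b) (tailL M v.b k) hxy
    have hpm := pmL_swap (bList k v.b) (tailL M v.b k) (v.b (k + 1)) v.d
    rw [hi, ← hpm]
    push_cast
    ring
  have hK₂ : Kc p₂ = Kc v := by
    have hA : bList k p₂.b = bList k v.b := bList_congr fun m h1 h2 => by
      rw [hp₂b]; exact Function.update_of_ne (by omega) _ _
    have hR : tailL M p₂.b k = tailL M v.b k := tailL_congr fun m h1 h2 => by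
      rw [hp₂b]; exact Function.update_of_ne (by omega) _ _
    rw [Kc_closed p₂, Kc_closed v, tuple_succ1 p₂ k hk rfl, tuple_succ2 v k hk ht,
      hA, hR, hmid, hp₂d, hp₂T]
  have huniq : ∀ w : St M, inS w → w ≠ p₁ → w ≠ p₂ → Tmat M q w v = 0 := by
    intro w hw hw1 hw2
    apply Tmat_eq_zero
    intro a
    cases a with
    | D =>
      rintro ⟨c1, c2, c3, c4, c5, c6⟩
      have hwt : w.t = k + 1 := by omega
      rw [hwt] at c2 c5 c6
      have h6 := congrFun c6 (k + 1)
      rw [Function.update_self] at h6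
      refine hw2 (St.ext' ?_ (by rw [hp₂d]; omega) c4.symm (by show w.t = k + 1; omega))
      funext m
      rcases eq_or_ne m (k + 1) with rfl | hm
      · rw [hmid]; omega
      · have h7 := congrFun c6 m
        rw [Function.update_of_ne hm] at h7
        rw [hp₂b, Function.update_of_ne hm]
        omega
    | I =>
      rintro ⟨c1, c2, c3, c4, c5, c6⟩
      have hwt : w.t = k + 1 := by omega
      rw [hwt] at c2
      have h6 := congrFun c6 (k + 1)
      omega
    | Ne =>
      rintro ⟨c1, c2, c3, c4, c5, c6⟩
      have hwt : w.t = k + 1 := by omega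
      rw [hwt] at c2
      have h6 := congrFun c6 (k + 1)
      omega
    | Nl =>
      rintro ⟨c1, c2, c3, c4, c5, c6⟩
      exact hw1 (St.ext' c6.symm c5.symm c4.symm (by show w.t = k + 1; omega))
    | dm => rintro ⟨c1, c2, c3, c4, c5, c6⟩; omega
    | bp => rintro ⟨c1, c2, c3, c4, c5, c6⟩; omega
  rw [tsum_two_pred v p₁ p₂ ⟨hv.1, hv.2⟩ ⟨hv.1, hv.2⟩ hne huniq, hTmat₁, hTmat₂,
    hK₁, hK₂, one_mul, show -(Kc v + 1) = -Kc v - 1 by ring]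
  exact enn_pair hq (-Kc v)

end BDM

open BDM in
/-- `μ(s) = q^{−K(s)}` is invariant under the BDM transition matrix:
for every `s' ∈ S`, `∑_{s ∈ S} 𝒯(s,s')·q^{−K(s)} = q^{−K(s')}`, i.e.
`(q^{−K(s)})_{s∈S}` is a left eigenvector of `𝒯` with eigenvalue `1`. -/
theorem bdm_qPowNegClass_invariant (M q : ℕ) (hM : 1 ≤ M) (hq : 2 ≤ q)
    (s' : SS M) :
    ∑' s : SS M, Tmat M q s.1 s'.1 * (q : ℝ≥0∞) ^ (-(Kc s.1))
      = (q : ℝ≥0∞) ^ (-(Kc s'.1)) := by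
  have hv := s'.2
  by_cases ht1 : s'.1.t = 1
  · by_cases hTz : s'.1.T = 0
    · exact case_bp M q hM hq s'.1 hv ht1 hTz
    · exact case_dm M q hM hq s'.1 hv ht1 hTz
  · have h1 := s'.1.ht1
    have h2 := s'.1.ht2
    have ht : s'.1.t = (s'.1.t - 2) + 2 := by omega
    have hk : s'.1.t - 2 < M := by omega
    rcases lt_trichotomy (s'.1.b ((s'.1.t - 2) + 1)) s'.1.d with h | h | h
    · exact case_gt M q hq s'.1 hv (s'.1.t - 2) hk ht h
    · exact case_eq M q hq s'.1 hv (s'.1.t - 2) hk ht h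
    · exact case_lt M q hq s'.1 hv (s'.1.t - 2) hk ht h
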